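/- Under assumptions (H1)–(H4), let b̃ = sup_{(u,v)∈U×V} |b(0,u,v)|, σ̃ = sup_{(x,u,v)} ‖σ(x,u,v)‖, and R = (b̃ + √(b̃² + Kσ̃²))/K. Suppose w₁, w₂ : ℝ^n → ℝ are twice continuously differentiable and bounded together with their first and second derivatives, ρ ∈ ℝ, and for all x ∈ ℝ^n: ρ ≤ sup_{v∈V} inf_{u∈U} H(x, Dw₁(x), D²w₁(x), u, v) and ρ ≥ sup_{v∈V} inf_{u∈U} H(x, Dw₂(x), D²w₂(x), u, v). If w₁(x) = w₂(x) for all x in the closed ball of radius R centered at the origin, then w₁(x) ≤ w₂(x) for all x ∈ ℝ^n. -/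

import Mathlib

open scoped RealInnerProductSpace
open Metric Filter MeasureTheory Matrix

noncomputable section

/-- `ℝ^n` as a Euclidean space. -/
abbrev En (n : ℕ) := EuclideanSpace ℝ (Fin n)

/-- The Frobenius (trace) norm of a real matrix. -/
def frobNorm {m k : ℕ} (A : Matrix (Fin m) (Fin k) ℝ) : ℝ :=
  Real.sqrt (∑ i, ∑ j, (A i j) ^ 2)

/-- The Hessian matrix of `φ` at `x`, with entries given by the second iterated
Fréchet derivative evaluated at pairs of standard basis vectors. -/
def hess {n : ℕ} (φ : En n → ℝ) (x : En n) : Matrix (Fin n) (Fin n) ℝ :=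
  Matrix.of fun i j =>
    iteratedFDeriv ℝ 2 φ x ![EuclideanSpace.single i 1, EuclideanSpace.single j 1]

/-- `C³_b(ℝ^n)`: three times continuously differentiable functions whose derivatives of
order 1 to 3 are bounded. -/
def C3b {n : ℕ} (φ : En n → ℝ) : Prop :=
  ContDiff ℝ 3 φ ∧
    ∀ i : ℕ, 1 ≤ i → i ≤ 3 → ∃ C : ℝ, ∀ x : En n, ‖iteratedFDeriv ℝ i φ x‖ ≤ C

/-- The Hamiltonian `H(x,p,A,u,v) = ½ tr(σσ^⊤ A) + ⟨b, p⟩ + f`. -/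
def Ham {n d : ℕ} {U V : Type*}
    (b : En n → U → V → En n) (σ : En n → U → V → Matrix (Fin n) (Fin d) ℝ)
    (f : En n → U → V → ℝ)
    (x p : En n) (A : Matrix (Fin n) (Fin n) ℝ) (u : U) (v : V) : ℝ :=
  (1 / 2) * Matrix.trace (σ x u v * (σ x u v)ᵀ * A) + (inner ℝ (b x u v) p : ℝ) + f x u v

/-- `(ρ, w)` is a viscosity subsolution of the ergodic equation `ρ = G(x, Dw(x), D²w(x))`. -/
def IsViscSubsol {n : ℕ} (G : En n → En n → Matrix (Fin n) (Fin n) ℝ → ℝ)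
    (ρ : ℝ) (w : En n → ℝ) : Prop :=
  Continuous w ∧
    ∀ φ : En n → ℝ, C3b φ → ∀ x : En n,
      IsLocalMax (fun y => w y - φ y) x → ρ ≤ G x (gradient φ x) (hess φ x)

/-- `(ρ, w)` is a viscosity supersolution of the ergodic equation `ρ = G(x, Dw(x), D²w(x))`. -/
def IsViscSupersol {n : ℕ} (G : En n → En n → Matrix (Fin n) (Fin n) ℝ → ℝ)
    (ρ : ℝ) (w : En n → ℝ) : Prop :=
  Continuous w ∧
    ∀ φ : En n → ℝ, C3b φ → ∀ x : En n,
      IsLocalMin (fun y => w y - φ y) x → ρ ≥ G x (gradient φ x) (hess φ x)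

/-- `(ρ, w)` is a viscosity solution of the ergodic equation `ρ = G(x, Dw(x), D²w(x))`. -/
def IsViscSol {n : ℕ} (G : En n → En n → Matrix (Fin n) (Fin n) ℝ → ℝ)
    (ρ : ℝ) (w : En n → ℝ) : Prop :=
  IsViscSubsol G ρ w ∧ IsViscSupersol G ρ w

/-! Penalize: for `ε > 0` the function `w₁ - w₂ - ε‖x‖²` attains a global maximum at some `a`.
At `a` we have `Dw₁ - Dw₂ = 2εa` and `D²w₁ - D²w₂ ≤ 2ε I`, so (H3) and (H4) give
`H(a, Dw₁, D²w₁, u, v) ≤ H(a, Dw₂, D²w₂, u, v) + ε (σ̃² + 2b̃‖a‖ - K‖a‖²)` for all `u, v`.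
The bracket is negative precisely when `‖a‖ > R`, which would contradict
`ρ ≤ sup inf H₁` and `sup inf H₂ ≤ ρ`. Hence `‖a‖ ≤ R`, where `w₁ = w₂`, so
`w₁ - w₂ ≤ ε‖x‖²` everywhere, and `ε → 0` concludes. -/

open Topology

theorem IsLocalMax.deriv_deriv_nonpos {h : ℝ → ℝ} {a : ℝ} (hmax : IsLocalMax h a)
    (hc : ContinuousAt h a) : deriv (deriv h) a ≤ 0 := by
  by_contra! hpos
  -- A positive second derivative would make `a` a local minimum too, so `h` is locally constant.
  have hmin : IsLocalMin h a := isLocalMin_of_deriv_deriv_pos hpos hmax.deriv_eq_zero hc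
  have hconst : h =ᶠ[𝓝 a] fun _ => h a :=
    (hmax.and hmin).mono fun y hy => le_antisymm hy.1 hy.2
  have hderiv : deriv h =ᶠ[𝓝 a] fun _ => 0 := hconst.deriv.trans (by simp)
  simp [hderiv.deriv_eq] at hpos

theorem IsLocalMax.fderiv_fderiv_apply_self_nonpos {E : Type*} [NormedAddCommGroup E]
    [NormedSpace ℝ E] {g : E → ℝ} {a : E} (hmax : IsLocalMax g a) (hg : Differentiable ℝ g)
    (hg' : DifferentiableAt ℝ (fderiv ℝ g) a) (ξ : E) :
    fderiv ℝ (fderiv ℝ g) a ξ ξ ≤ 0 := by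
  set line : ℝ → E := fun t => a + t • ξ
  have hline : ∀ t, HasDerivAt line ξ t := fun t => by
    simpa [line] using ((hasDerivAt_id t).smul_const ξ).const_add a
  have hline0 : line 0 = a := by simp [line]
  have hderiv : deriv (g ∘ line) = fun t => fderiv ℝ g (line t) ξ :=
    funext fun t => ((hg _).hasFDerivAt.comp_hasDerivAt t (hline t)).deriv
  have hderiv2 : HasDerivAt (fun t => fderiv ℝ g (line t) ξ) (fderiv ℝ (fderiv ℝ g) a ξ ξ) 0 := by
    have hg'' : HasFDerivAt (fderiv ℝ g) (fderiv ℝ (fderiv ℝ g) a) (line 0) := by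
      rw [hline0]; exact hg'.hasFDerivAt
    exact (ContinuousLinearMap.apply ℝ ℝ ξ).hasFDerivAt.comp_hasDerivAt 0
      (hg''.comp_hasDerivAt 0 (hline 0))
  rw [← hderiv2.deriv, ← hderiv]
  rw [← hline0] at hmax
  exact (hmax.comp_continuous (hline 0).continuousAt).deriv_deriv_nonpos
    ((hg _).continuousAt.comp (hline 0).continuousAt)

theorem exists_forall_sub_mul_norm_sq_le {E : Type*} [NormedAddCommGroup E] [ProperSpace E]
    {φ : E → ℝ} (hφ : Continuous φ) {M : ℝ} (hM : ∀ x, φ x ≤ M) {ε : ℝ} (hε : 0 < ε) :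
    ∃ a, ∀ x, φ x - ε * ‖x‖ ^ 2 ≤ φ a - ε * ‖a‖ ^ 2 := by
  refine Continuous.exists_forall_ge (f := fun x => φ x - ε * ‖x‖ ^ 2) (by fun_prop) ?_
  have hpen : Tendsto (fun x : E => -(ε * ‖x‖ ^ 2)) (cocompact E) atBot :=
    tendsto_neg_atTop_atBot.comp <| Tendsto.const_mul_atTop hε <|
      (tendsto_pow_atTop two_ne_zero).comp tendsto_norm_cocompact_atTop
  simpa [sub_eq_add_neg] using tendsto_atBot_add_left_of_ge _ M hM hpen

section Penalization

variable {F : Type*} [NormedAddCommGroup F] [InnerProductSpace ℝ F] {φ : F → ℝ} {ε : ℝ} {a : F}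

theorem hasFDerivAt_sub_mul_norm_sq {x : F} (hφ : DifferentiableAt ℝ φ x) :
    HasFDerivAt (fun x => φ x - ε * ‖x‖ ^ 2) (fderiv ℝ φ x - (2 * ε) • innerSL ℝ x) x := by
  refine (hφ.hasFDerivAt.sub
    ((hasStrictFDerivAt_norm_sq x).hasFDerivAt.const_mul ε)).congr_fderiv ?_
  ext y
  simp only [_root_.sub_apply, _root_.smul_apply, smul_eq_mul, nsmul_eq_mul]
  ring

theorem gradient_eq_of_isLocalMax_sub_mul_norm_sq [CompleteSpace F]
    (hφ : DifferentiableAt ℝ φ a) (hmax : IsLocalMax (fun x => φ x - ε * ‖x‖ ^ 2) a) :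
    gradient φ a = (2 * ε) • a := by
  have h0 := hmax.hasFDerivAt_eq_zero (hasFDerivAt_sub_mul_norm_sq hφ)
  refine (hasGradientAt_iff_hasFDerivAt.2 ?_).gradient
  have hdual : InnerProductSpace.toDual ℝ F ((2 * ε) • a) = fderiv ℝ φ a := by
    rw [sub_eq_zero] at h0
    ext y
    simp [h0]
  exact hdual ▸ hφ.hasFDerivAt

theorem fderiv_fderiv_apply_self_le_of_isLocalMax_sub_mul_norm_sq (hφ : ContDiff ℝ 2 φ)
    (hmax : IsLocalMax (fun x => φ x - ε * ‖x‖ ^ 2) a) (ξ : F) :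
    fderiv ℝ (fderiv ℝ φ) a ξ ξ ≤ 2 * ε * ‖ξ‖ ^ 2 := by
  have hdiff : Differentiable ℝ φ := hφ.differentiable (by norm_num)
  have hdiff' : Differentiable ℝ (fderiv ℝ φ) :=
    (hφ.fderiv_right (m := 1) (by norm_num)).differentiable (by norm_num)
  have hpen : fderiv ℝ (fun x => φ x - ε * ‖x‖ ^ 2) =
      fun x => fderiv ℝ φ x - (2 * ε) • innerSL ℝ x :=
    funext fun x => (hasFDerivAt_sub_mul_norm_sq (hdiff x)).fderiv
  -- `innerSL ℝ` is typed as conjugate-linear; over `ℝ` it is linear by `rfl`, so it can be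
  -- differentiated as a continuous linear map.
  let T : F →L[ℝ] F →L[ℝ] ℝ := innerSL ℝ
  have hpen' : HasFDerivAt (fderiv ℝ (fun x => φ x - ε * ‖x‖ ^ 2))
      (fderiv ℝ (fderiv ℝ φ) a - (2 * ε) • T) a := by
    rw [hpen]
    exact (hdiff' a).hasFDerivAt.sub (T.hasFDerivAt.const_smul (2 * ε))
  have h := hmax.fderiv_fderiv_apply_self_nonpos
    (fun x => (hasFDerivAt_sub_mul_norm_sq (hdiff x)).differentiableAt) hpen'.differentiableAt ξ
  have hT : T ξ ξ = ‖ξ‖ ^ 2 := real_inner_self_eq_norm_sq ξ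
  rw [hpen'.fderiv] at h
  simp only [_root_.sub_apply, _root_.smul_apply, smul_eq_mul, hT] at h
  linarith

end Penalization

theorem dotProduct_hess_mulVec {n : ℕ} (φ : En n → ℝ) (x : En n) (ξ : Fin n → ℝ) :
    ξ ⬝ᵥ hess φ x *ᵥ ξ = fderiv ℝ (fderiv ℝ φ) x (WithLp.toLp 2 ξ) (WithLp.toLp 2 ξ) := by
  let e := (EuclideanSpace.basisFun (Fin n) ℝ).toBasis
  have hmat : hess φ x = LinearMap.toMatrix₂ e e (fderiv ℝ (fderiv ℝ φ) x).toLinearMap₁₂ := by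
    ext i j
    simp [hess, e, LinearMap.toMatrix₂_apply, iteratedFDeriv_two_apply]
  have hrepr : (EuclideanSpace.basisFun (Fin n) ℝ).repr.symm (WithLp.toLp 2 ξ) = WithLp.toLp 2 ξ :=
    (EuclideanSpace.basisFun (Fin n) ℝ).repr.symm_apply_eq.2 rfl
  simpa [hmat, e, hrepr] using
    dotProduct_toMatrix₂_mulVec e e (fderiv ℝ (fderiv ℝ φ) x).toLinearMap₁₂ ξ ξ

theorem hess_sub {n : ℕ} {φ ψ : En n → ℝ} (hφ : ContDiff ℝ 2 φ) (hψ : ContDiff ℝ 2 ψ) (x : En n) :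
    hess (φ - ψ) x = hess φ x - hess ψ x := by
  ext i j
  simp [hess, iteratedFDeriv_sub_apply hφ.contDiffAt hψ.contDiffAt]

theorem gradient_sub {F : Type*} [NormedAddCommGroup F] [InnerProductSpace ℝ F] [CompleteSpace F]
    {φ ψ : F → ℝ} {x : F} (hφ : DifferentiableAt ℝ φ x) (hψ : DifferentiableAt ℝ ψ x) :
    gradient (φ - ψ) x = gradient φ x - gradient ψ x := by
  simp [gradient, fderiv_sub hφ hψ]

theorem Matrix.trace_mul_transpose_mul_eq_sum {m k : Type*} [Fintype m] [Fintype k]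
    (A : Matrix m m ℝ) (S : Matrix m k ℝ) :
    trace (S * Sᵀ * A) = ∑ j, (fun i => S i j) ⬝ᵥ A *ᵥ (fun i => S i j) := by
  rw [Matrix.mul_assoc, trace_mul_comm, Matrix.mul_assoc]
  simp only [trace, diag, mul_apply, dotProduct, mulVec, transpose_apply, Finset.mul_sum]

theorem Matrix.trace_mul_transpose_mul_le {m k : Type*} [Fintype m] [Fintype k]
    {A : Matrix m m ℝ} {c : ℝ} (hA : ∀ ξ : m → ℝ, ξ ⬝ᵥ A *ᵥ ξ ≤ c * (ξ ⬝ᵥ ξ))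
    (S : Matrix m k ℝ) :
    trace (S * Sᵀ * A) ≤ c * ∑ i, ∑ j, S i j ^ 2 := by
  rw [trace_mul_transpose_mul_eq_sum, Finset.sum_comm, Finset.mul_sum]
  exact Finset.sum_le_sum fun j _ => by simpa [dotProduct, sq] using hA fun i => S i j

theorem frobNorm_sq {m k : ℕ} (A : Matrix (Fin m) (Fin k) ℝ) :
    frobNorm A ^ 2 = ∑ i, ∑ j, A i j ^ 2 :=
  Real.sq_sqrt (by positivity)

theorem two_inner_self_le_of_strongly_dissipative {E : Type*} [NormedAddCommGroup E]
    [InnerProductSpace ℝ E] {β : E → E} {K c : ℝ}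
    (hβ : ∀ x y, 2 * ⟪x - y, β x - β y⟫ ≤ -K * ‖x - y‖ ^ 2) (hβ0 : ‖β 0‖ ≤ c) (x : E) :
    2 * ⟪x, β x⟫ ≤ 2 * c * ‖x‖ - K * ‖x‖ ^ 2 := by
  have hx := hβ x 0
  have h0 : ⟪x, β 0⟫ ≤ ‖x‖ * c :=
    (real_inner_le_norm x (β 0)).trans (mul_le_mul_of_nonneg_left hβ0 (norm_nonneg x))
  rw [sub_zero, inner_sub_right] at hx
  linarith

theorem mul_sq_sub_two_mul_sub_sq_pos {K β s r : ℝ} (hK : 0 < K)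
    (hr : (β + √(β ^ 2 + K * s ^ 2)) / K < r) :
    0 < K * r ^ 2 - 2 * β * r - s ^ 2 := by
  have hq : √(β ^ 2 + K * s ^ 2) ^ 2 = β ^ 2 + K * s ^ 2 := Real.sq_sqrt (by positivity)
  have hq0 : 0 ≤ √(β ^ 2 + K * s ^ 2) := Real.sqrt_nonneg _
  rw [div_lt_iff₀ hK] at hr
  nlinarith

theorem iSup_iInf_le_iSup_iInf_add {U V : Type*} [TopologicalSpace U] [TopologicalSpace V]
    [CompactSpace U] [CompactSpace V] [Nonempty U] [Nonempty V] {F G : U → V → ℝ}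
    (hF : Continuous fun uv : U × V => F uv.1 uv.2) (hG : Continuous fun uv : U × V => G uv.1 uv.2)
    {δ : ℝ} (h : ∀ u v, F u v ≤ G u v + δ) :
    ⨆ v, ⨅ u, F u v ≤ (⨆ v, ⨅ u, G u v) + δ := by
  obtain ⟨u₀⟩ := ‹Nonempty U›
  obtain ⟨cF, hcF⟩ := (isCompact_range hF).bddBelow
  obtain ⟨cG, hcG⟩ := (isCompact_range hG).bddBelow
  obtain ⟨CG, hCG⟩ := (isCompact_range hG).bddAbove
  have hFbdd : ∀ v, BddBelow (Set.range fun u => F u v) := fun v =>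
    ⟨cF, by rintro _ ⟨u, rfl⟩; exact hcF ⟨(u, v), rfl⟩⟩
  have hGbdd : ∀ v, BddBelow (Set.range fun u => G u v) := fun v =>
    ⟨cG, by rintro _ ⟨u, rfl⟩; exact hcG ⟨(u, v), rfl⟩⟩
  have hinfGbdd : BddAbove (Set.range fun v => ⨅ u, G u v) :=
    ⟨CG, by rintro _ ⟨v, rfl⟩; exact (ciInf_le (hGbdd v) u₀).trans (hCG ⟨(u₀, v), rfl⟩)⟩
  refine ciSup_le fun v => ?_
  have hinf : (⨅ u, F u v) - δ ≤ ⨅ u, G u v :=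
    le_ciInf fun u => by linarith [ciInf_le (hFbdd v) u, h u v]
  linarith [le_ciSup hinfGbdd v]

section Hamiltonian

variable {n d : ℕ} {U V : Type*} (b : En n → U → V → En n)
  (σ : En n → U → V → Matrix (Fin n) (Fin d) ℝ) (f : En n → U → V → ℝ)

theorem Ham_sub_Ham (x p₁ p₂ : En n) (A₁ A₂ : Matrix (Fin n) (Fin n) ℝ) (u : U) (v : V) :
    Ham b σ f x p₁ A₁ u v - Ham b σ f x p₂ A₂ u v =
      (1 / 2) * trace (σ x u v * (σ x u v)ᵀ * (A₁ - A₂)) + ⟪b x u v, p₁ - p₂⟫ := by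
  simp only [Ham, Matrix.mul_sub, trace_sub, inner_sub_right]
  ring

theorem continuous_Ham [TopologicalSpace U] [TopologicalSpace V] {x : En n}
    (hb : Continuous fun uv : U × V => b x uv.1 uv.2)
    (hσ : Continuous fun uv : U × V => σ x uv.1 uv.2)
    (hf : Continuous fun uv : U × V => f x uv.1 uv.2) (p : En n) (A : Matrix (Fin n) (Fin n) ℝ) :
    Continuous fun uv : U × V => Ham b σ f x p A uv.1 uv.2 :=
  (continuous_const.mul ((hσ.matrix_mul hσ.matrix_transpose).matrix_mul
    continuous_const).matrix_trace).add (hb.inner continuous_const) |>.add hf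

variable {b σ f}

theorem Ham_le_Ham_add_of_isLocalMax {K σt bt ε : ℝ} (hε : 0 ≤ ε)
    (H3 : ∀ (x y : En n) (u : U) (v : V),
      2 * (inner ℝ (x - y) (b x u v - b y u v) : ℝ) ≤ -K * ‖x - y‖ ^ 2)
    (H4 : ∀ (x : En n) (u : U) (v : V), frobNorm (σ x u v) ≤ σt)
    (hbt : ∀ (u : U) (v : V), ‖b 0 u v‖ ≤ bt)
    {w₁ w₂ : En n → ℝ} (hw₁ : ContDiff ℝ 2 w₁) (hw₂ : ContDiff ℝ 2 w₂) {a : En n}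
    (hmax : IsLocalMax (fun x => (w₁ - w₂) x - ε * ‖x‖ ^ 2) a) (u : U) (v : V) :
    Ham b σ f a (gradient w₁ a) (hess w₁ a) u v ≤
      Ham b σ f a (gradient w₂ a) (hess w₂ a) u v + ε * (σt ^ 2 + 2 * bt * ‖a‖ - K * ‖a‖ ^ 2) := by
  have hdiff : ∀ {w : En n → ℝ}, ContDiff ℝ 2 w → DifferentiableAt ℝ w a :=
    fun hw => hw.differentiable (by norm_num) a
  have hw : ContDiff ℝ 2 (w₁ - w₂) := hw₁.sub hw₂
  have hquad : ∀ ξ : Fin n → ℝ, ξ ⬝ᵥ hess (w₁ - w₂) a *ᵥ ξ ≤ 2 * ε * (ξ ⬝ᵥ ξ) := fun ξ => by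
    rw [dotProduct_hess_mulVec]
    convert fderiv_fderiv_apply_self_le_of_isLocalMax_sub_mul_norm_sq hw hmax _ using 2
    rw [← real_inner_self_eq_norm_sq, EuclideanSpace.inner_toLp_toLp, star_trivial]
  have htrace : trace (σ a u v * (σ a u v)ᵀ * hess (w₁ - w₂) a) ≤ 2 * ε * σt ^ 2 := by
    refine (trace_mul_transpose_mul_le hquad _).trans ?_
    rw [← frobNorm_sq]
    gcongr
    · exact Real.sqrt_nonneg _
    · exact H4 a u v
  have hdrift : ⟪b a u v, (2 * ε) • a⟫ ≤ ε * (2 * bt * ‖a‖ - K * ‖a‖ ^ 2) := by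
    have h := two_inner_self_le_of_strongly_dissipative (β := fun x => b x u v)
      (fun x y => H3 x y u v) (hbt u v) a
    rw [real_inner_smul_right, real_inner_comm]
    nlinarith
  rw [← sub_le_iff_le_add', Ham_sub_Ham, ← gradient_sub (hdiff hw₁) (hdiff hw₂),
    gradient_eq_of_isLocalMax_sub_mul_norm_sq (hdiff hw) hmax, ← hess_sub hw₁ hw₂]
  linarith

end Hamiltonian

section Comparison

variable {n d : ℕ} {U V : Type*} [TopologicalSpace U] [CompactSpace U] [Nonempty U]
  [TopologicalSpace V] [CompactSpace V] [Nonempty V] {b : En n → U → V → En n}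
  {σ : En n → U → V → Matrix (Fin n) (Fin d) ℝ} {f : En n → U → V → ℝ}

theorem norm_le_of_isLocalMax_sub_mul_norm_sq
    (H1b : ∀ x : En n, Continuous fun uv : U × V => b x uv.1 uv.2)
    (H1σ : ∀ x : En n, Continuous fun uv : U × V => σ x uv.1 uv.2)
    (H1f : ∀ x : En n, Continuous fun uv : U × V => f x uv.1 uv.2)
    {K σt bt : ℝ} (hK : 0 < K)
    (H3 : ∀ (x y : En n) (u : U) (v : V),
      2 * (inner ℝ (x - y) (b x u v - b y u v) : ℝ) ≤ -K * ‖x - y‖ ^ 2)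
    (H4 : ∀ (x : En n) (u : U) (v : V), frobNorm (σ x u v) ≤ σt)
    (hbt : ∀ (u : U) (v : V), ‖b 0 u v‖ ≤ bt)
    {ρ : ℝ} {w₁ w₂ : En n → ℝ} (hw₁ : ContDiff ℝ 2 w₁) (hw₂ : ContDiff ℝ 2 w₂) {a : En n}
    (hsub : ρ ≤ ⨆ v : V, ⨅ u : U, Ham b σ f a (gradient w₁ a) (hess w₁ a) u v)
    (hsuper : ρ ≥ ⨆ v : V, ⨅ u : U, Ham b σ f a (gradient w₂ a) (hess w₂ a) u v)
    {ε : ℝ} (hε : 0 < ε) (hmax : IsLocalMax (fun x => (w₁ - w₂) x - ε * ‖x‖ ^ 2) a) :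
    ‖a‖ ≤ (bt + √(bt ^ 2 + K * σt ^ 2)) / K := by
  by_contra! hR
  have hgap : ε * (σt ^ 2 + 2 * bt * ‖a‖ - K * ‖a‖ ^ 2) < 0 :=
    mul_neg_of_pos_of_neg hε (by linarith [mul_sq_sub_two_mul_sub_sq_pos hK hR])
  have hcmp := iSup_iInf_le_iSup_iInf_add
    (continuous_Ham b σ f (H1b a) (H1σ a) (H1f a) _ _)
    (continuous_Ham b σ f (H1b a) (H1σ a) (H1f a) _ _)
    (Ham_le_Ham_add_of_isLocalMax hε.le H3 H4 hbt hw₁ hw₂ hmax)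
  linarith

theorem sub_le_mul_norm_sq_of_eqOn_closedBall
    (H1b : ∀ x : En n, Continuous fun uv : U × V => b x uv.1 uv.2)
    (H1σ : ∀ x : En n, Continuous fun uv : U × V => σ x uv.1 uv.2)
    (H1f : ∀ x : En n, Continuous fun uv : U × V => f x uv.1 uv.2)
    {K σt bt : ℝ} (hK : 0 < K)
    (H3 : ∀ (x y : En n) (u : U) (v : V),
      2 * (inner ℝ (x - y) (b x u v - b y u v) : ℝ) ≤ -K * ‖x - y‖ ^ 2)
    (H4 : ∀ (x : En n) (u : U) (v : V), frobNorm (σ x u v) ≤ σt)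
    (hbt : ∀ (u : U) (v : V), ‖b 0 u v‖ ≤ bt)
    {ρ : ℝ} {w₁ w₂ : En n → ℝ} (hw₁ : ContDiff ℝ 2 w₁) (hw₂ : ContDiff ℝ 2 w₂)
    {M : ℝ} (hM : ∀ x, (w₁ - w₂) x ≤ M)
    (hsub : ∀ x : En n,
      ρ ≤ ⨆ v : V, ⨅ u : U, Ham b σ f x (gradient w₁ x) (hess w₁ x) u v)
    (hsuper : ∀ x : En n,
      ρ ≥ ⨆ v : V, ⨅ u : U, Ham b σ f x (gradient w₂ x) (hess w₂ x) u v)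
    (hagree : ∀ x ∈ closedBall (0 : En n) ((bt + √(bt ^ 2 + K * σt ^ 2)) / K), w₁ x = w₂ x)
    {ε : ℝ} (hε : 0 < ε) (x : En n) :
    w₁ x - w₂ x ≤ ε * ‖x‖ ^ 2 := by
  obtain ⟨a, ha⟩ := exists_forall_sub_mul_norm_sq_le (hw₁.continuous.sub hw₂.continuous) hM hε
  have hnorm := norm_le_of_isLocalMax_sub_mul_norm_sq H1b H1σ H1f hK H3 H4 hbt hw₁ hw₂
    (hsub a) (hsuper a) hε (Eventually.of_forall ha)
  have hwa := hagree a (mem_closedBall_zero_iff.2 hnorm)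
  have hxa := ha x
  simp only [Pi.sub_apply, hwa, sub_self, zero_sub] at hxa
  nlinarith [sq_nonneg ‖a‖]

end Comparison

theorem classical_C2_comparison_general
    {n d : ℕ}
    {U V : Type*} [MetricSpace U] [CompactSpace U] [Nonempty U]
    [MetricSpace V] [CompactSpace V] [Nonempty V]
    (b : En n → U → V → En n) (σ : En n → U → V → Matrix (Fin n) (Fin d) ℝ)
    (f : En n → U → V → ℝ)
    -- (H1)
    (H1b : ∀ x : En n, Continuous fun uv : U × V => b x uv.1 uv.2)
    (H1σ : ∀ x : En n, Continuous fun uv : U × V => σ x uv.1 uv.2)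
    (H1f : ∀ x : En n, Continuous fun uv : U × V => f x uv.1 uv.2)
    -- (H2)
    (Cσ : ℝ)
    -- (H3)
    (K : ℝ) (hK : Cσ ^ 2 < K)
    (H3 : ∀ (x y : En n) (u : U) (v : V),
      2 * (inner ℝ (x - y) (b x u v - b y u v) : ℝ) ≤ -K * ‖x - y‖ ^ 2)
    -- (H4) together with `σ̃` the supremum of `‖σ‖`
    (σt : ℝ)
    (H4 : ∀ (x : En n) (u : U) (v : V), frobNorm (σ x u v) ≤ σt)
    -- `b̃` the supremum of `|b(0,u,v)|`
    (bt : ℝ)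
    (hbt : ∀ (u : U) (v : V), ‖b 0 u v‖ ≤ bt)
    -- `w₁, w₂` are C² and bounded together with their first and second derivatives
    (ρ : ℝ) (w₁ w₂ : En n → ℝ)
    (hw₁reg : ContDiff ℝ 2 w₁) (hw₂reg : ContDiff ℝ 2 w₂)
    (hw₁bd : ∃ C : ℝ, ∀ x : En n, |w₁ x| ≤ C ∧ ‖iteratedFDeriv ℝ 1 w₁ x‖ ≤ C ∧
      ‖iteratedFDeriv ℝ 2 w₁ x‖ ≤ C)
    (hw₂bd : ∃ C : ℝ, ∀ x : En n, |w₂ x| ≤ C ∧ ‖iteratedFDeriv ℝ 1 w₂ x‖ ≤ C ∧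
      ‖iteratedFDeriv ℝ 2 w₂ x‖ ≤ C)
    -- classical sub- and supersolution inequalities
    (hsub : ∀ x : En n,
      ρ ≤ ⨆ v : V, ⨅ u : U, Ham b σ f x (gradient w₁ x) (hess w₁ x) u v)
    (hsuper : ∀ x : En n,
      ρ ≥ ⨆ v : V, ⨅ u : U, Ham b σ f x (gradient w₂ x) (hess w₂ x) u v)
    -- agreement on the closed ball of radius `R`
    (hagree : ∀ x ∈ Metric.closedBall (0 : En n)
        ((bt + Real.sqrt (bt ^ 2 + K * σt ^ 2)) / K), w₁ x = w₂ x) :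
    ∀ x : En n, w₁ x ≤ w₂ x := by
  intro x
  obtain ⟨C₁, hC₁⟩ := hw₁bd
  obtain ⟨C₂, hC₂⟩ := hw₂bd
  have hM : ∀ y, (w₁ - w₂) y ≤ C₁ + C₂ := fun y => by
    simp only [Pi.sub_apply]
    linarith [(abs_le.1 (hC₁ y).1).2, (abs_le.1 (hC₂ y).1).1]
  have hK0 : 0 < K := (sq_nonneg Cσ).trans_lt hK
  refine le_of_forall_pos_le_add fun δ hδ => ?_
  have hε : 0 < δ / (‖x‖ ^ 2 + 1) := by positivity
  have hpen := sub_le_mul_norm_sq_of_eqOn_closedBall H1b H1σ H1f hK0 H3 H4 hbt hw₁reg hw₂reg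
    hM hsub hsuper hagree hε x
  have hsmall : δ / (‖x‖ ^ 2 + 1) * ‖x‖ ^ 2 ≤ δ := by
    rw [div_mul_eq_mul_div, div_le_iff₀ (by positivity)]
    nlinarith
  linarith

/-- classical C² comparison step in Corollary 4.1: under (H1)–(H4),
with `R = (b̃ + √(b̃² + Kσ̃²))/K`, if `w₁, w₂` are bounded `C²` functions with bounded first
and second derivatives, `ρ ≤ sup_v inf_u H(x, Dw₁, D²w₁, u, v)` and
`ρ ≥ sup_v inf_u H(x, Dw₂, D²w₂, u, v)` pointwise, and `w₁ = w₂` on `B̄_R(0)`, then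
`w₁ ≤ w₂` on `ℝ^n`. -/
theorem classical_C2_comparison
    {n d : ℕ} (hn : 1 ≤ n) (hd : 1 ≤ d)
    {U V : Type*} [MetricSpace U] [CompactSpace U] [Nonempty U]
    [MetricSpace V] [CompactSpace V] [Nonempty V]
    (b : En n → U → V → En n) (σ : En n → U → V → Matrix (Fin n) (Fin d) ℝ)
    (f : En n → U → V → ℝ)
    -- (H1)
    (H1b : ∀ x : En n, Continuous fun uv : U × V => b x uv.1 uv.2)
    (H1σ : ∀ x : En n, Continuous fun uv : U × V => σ x uv.1 uv.2)
    (H1f : ∀ x : En n, Continuous fun uv : U × V => f x uv.1 uv.2)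
    -- (H2)
    (Cb Cσ Cf : ℝ) (hCb : 0 < Cb) (hCσ : 0 < Cσ) (hCf : 0 < Cf)
    (H2b : ∀ (x y : En n) (u : U) (v : V), ‖b x u v - b y u v‖ ≤ Cb * ‖x - y‖)
    (H2σ : ∀ (x y : En n) (u : U) (v : V), frobNorm (σ x u v - σ y u v) ≤ Cσ * ‖x - y‖)
    (H2f : ∀ (x y : En n) (u : U) (v : V), |f x u v - f y u v| ≤ Cf * ‖x - y‖)
    -- (H3)
    (K : ℝ) (hK : Cσ ^ 2 < K)
    (H3 : ∀ (x y : En n) (u : U) (v : V),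
      2 * (inner ℝ (x - y) (b x u v - b y u v) : ℝ) ≤ -K * ‖x - y‖ ^ 2)
    -- (H4) together with `σ̃` the supremum of `‖σ‖`
    (σt : ℝ) (hσt : 0 < σt)
    (H4 : ∀ (x : En n) (u : U) (v : V), frobNorm (σ x u v) ≤ σt)
    (hσt_least : ∀ s : ℝ, (∀ (x : En n) (u : U) (v : V), frobNorm (σ x u v) ≤ s) → σt ≤ s)
    -- `b̃` the supremum of `|b(0,u,v)|`
    (bt : ℝ)
    (hbt : ∀ (u : U) (v : V), ‖b 0 u v‖ ≤ bt)
    (hbt_least : ∀ s : ℝ, (∀ (u : U) (v : V), ‖b 0 u v‖ ≤ s) → bt ≤ s)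
    -- `w₁, w₂` are C² and bounded together with their first and second derivatives
    (ρ : ℝ) (w₁ w₂ : En n → ℝ)
    (hw₁reg : ContDiff ℝ 2 w₁) (hw₂reg : ContDiff ℝ 2 w₂)
    (hw₁bd : ∃ C : ℝ, ∀ x : En n, |w₁ x| ≤ C ∧ ‖iteratedFDeriv ℝ 1 w₁ x‖ ≤ C ∧
      ‖iteratedFDeriv ℝ 2 w₁ x‖ ≤ C)
    (hw₂bd : ∃ C : ℝ, ∀ x : En n, |w₂ x| ≤ C ∧ ‖iteratedFDeriv ℝ 1 w₂ x‖ ≤ C ∧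
      ‖iteratedFDeriv ℝ 2 w₂ x‖ ≤ C)
    -- classical sub- and supersolution inequalities
    (hsub : ∀ x : En n,
      ρ ≤ ⨆ v : V, ⨅ u : U, Ham b σ f x (gradient w₁ x) (hess w₁ x) u v)
    (hsuper : ∀ x : En n,
      ρ ≥ ⨆ v : V, ⨅ u : U, Ham b σ f x (gradient w₂ x) (hess w₂ x) u v)
    -- agreement on the closed ball of radius `R`
    (hagree : ∀ x ∈ Metric.closedBall (0 : En n)
        ((bt + Real.sqrt (bt ^ 2 + K * σt ^ 2)) / K), w₁ x = w₂ x) :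
    ∀ x : En n, w₁ x ≤ w₂ x :=
  classical_C2_comparison_general b σ f H1b H1σ H1f Cσ K hK H3 σt H4 bt hbt ρ w₁ w₂ hw₁reg hw₂reg
    hw₁bd hw₂bd hsub hsuper hagree
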